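/- Let Ω be a compact body with smooth boundary in a Riemannian 3-manifold, and let E, B be smooth vector fields with corresponding charges Q_E = (1/4π)∫_{∂Ω} g(E,ν)dσ and Q_B = (1/4π)∫_{∂Ω} g(B,ν)dσ. Suppose μ, defined on ∂Ω, satisfies μ − |J_{EM}| ≥ 0 and μ_{EM} := μ − (1/8π)(|E|²+|B|²) ≥ |J_{EM}| on ∂Ω. Then Q² := Q_E² + Q_B² ≤ (|∂Ω|/2π) ∫_{∂Ω} (μ − |J_{EM}|) dσ. -/

import Mathlib

/-! Pointwise, `⟪E, ν⟫² ≤ ‖E‖²` since `ν` is a unit normal, so by Cauchy–Schwarz (Jensen for `t ↦ t²`)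
`(∫ ⟪E, ν⟫)² ≤ |∂Ω| ∫ ‖E‖²`, and likewise for `B`. Integrating the charged dominant energy
condition bounds `(1/8π) ∫ (‖E‖² + ‖B‖²)` by `∫ (μ - |J_EM|)`, and the constants combine as
`(1/4π)² = (1/2π) · (1/8π)`. -/

open MeasureTheory Real
open scoped RealInnerProductSpace

noncomputable section

abbrev E3 := EuclideanSpace ℝ (Fin 3)

theorem sq_integral_le_measureReal_univ_mul_integral_sq {α : Type*} [MeasurableSpace α]
    {μ : Measure α} [IsFiniteMeasure μ] {f : α → ℝ} (hf : Integrable f μ)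
    (hf2 : Integrable (fun x => f x ^ 2) μ) :
    (∫ x, f x ∂μ) ^ 2 ≤ μ.real Set.univ * ∫ x, f x ^ 2 ∂μ := by
  rcases eq_zero_or_neZero μ with rfl | _
  · simp
  have jensen : (⨍ x, f x ∂μ) ^ 2 ≤ ⨍ x, f x ^ 2 ∂μ :=
    even_two.convexOn_pow.map_average_le (continuous_pow 2).continuousOn isClosed_univ
      (by simp) hf hf2
  set M := μ.real Set.univ
  have hM : 0 < M := measureReal_univ_pos
  rw [average_eq, average_eq, smul_eq_mul, smul_eq_mul, mul_pow] at jensen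
  calc (∫ x, f x ∂μ) ^ 2 = M ^ 2 * (M⁻¹ ^ 2 * (∫ x, f x ∂μ) ^ 2) := by field_simp
    _ ≤ M ^ 2 * (M⁻¹ * ∫ x, f x ^ 2 ∂μ) := by gcongr
    _ = M * ∫ x, f x ^ 2 ∂μ := by field_simp

theorem sq_inner_le_sq_norm_of_norm_eq_one {F : Type*} [NormedAddCommGroup F]
    [InnerProductSpace ℝ F] (x : F) {n : F} (hn : ‖n‖ = 1) : ⟪x, n⟫ ^ 2 ≤ ‖x‖ ^ 2 := by
  rw [sq]
  simpa [hn] using real_inner_mul_inner_self_le x n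

theorem sq_integral_inner_le_measureReal_univ_mul_integral_sq_norm {α F : Type*}
    [MeasurableSpace α] {μ : Measure α} [IsFiniteMeasure μ] [NormedAddCommGroup F]
    [InnerProductSpace ℝ F] {X n : α → F} (hn : ∀ x, ‖n x‖ = 1)
    (hX : Integrable (fun x => ⟪X x, n x⟫) μ) (hX2 : Integrable (fun x => ‖X x‖ ^ 2) μ) :
    (∫ x, ⟪X x, n x⟫ ∂μ) ^ 2 ≤ μ.real Set.univ * ∫ x, ‖X x‖ ^ 2 ∂μ := by
  have hpt (x : α) : ⟪X x, n x⟫ ^ 2 ≤ ‖X x‖ ^ 2 := sq_inner_le_sq_norm_of_norm_eq_one _ (hn x)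
  have hsq : Integrable (fun x => ⟪X x, n x⟫ ^ 2) μ :=
    hX2.mono' (hX.aestronglyMeasurable.pow 2) <| .of_forall fun x => by
      simpa [Real.norm_eq_abs] using hpt x
  calc _ ≤ μ.real Set.univ * ∫ x, ⟪X x, n x⟫ ^ 2 ∂μ :=
        sq_integral_le_measureReal_univ_mul_integral_sq hX hsq
    _ ≤ μ.real Set.univ * ∫ x, ‖X x‖ ^ 2 ∂μ :=
        mul_le_mul_of_nonneg_left (integral_mono hsq hX2 hpt) measureReal_nonneg

theorem charge_bound_general
    {Y : Type*} [MeasureSpace Y] [IsFiniteMeasure (volume : Measure Y)]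
    (E B : Y → E3) (ν : Y → E3) (μ JEM : Y → ℝ)
    (hν : ∀ y, ‖ν y‖ = 1)
    -- charged dominant energy condition μ_EM = μ − (1/8π)(|E|²+|B|²) ≥ |J_EM| on ∂Ω
    (hCDE : ∀ y, |JEM y| ≤ μ y - (1 / (8 * π)) * (‖E y‖ ^ 2 + ‖B y‖ ^ 2))
    (hintE : Integrable fun y => ⟪E y, ν y⟫)
    (hintB : Integrable fun y => ⟪B y, ν y⟫)
    (hintE2 : Integrable fun y => ‖E y‖ ^ 2)
    (hintB2 : Integrable fun y => ‖B y‖ ^ 2)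
    (hintμ : Integrable fun y => μ y - |JEM y|) :
    ((1 / (4 * π)) * ∫ y, ⟪E y, ν y⟫) ^ 2 + ((1 / (4 * π)) * ∫ y, ⟪B y, ν y⟫) ^ 2 ≤
      ((volume (Set.univ : Set Y)).toReal / (2 * π)) * ∫ y, (μ y - |JEM y|) := by
  have hE := sq_integral_inner_le_measureReal_univ_mul_integral_sq_norm hν hintE hintE2
  have hB := sq_integral_inner_le_measureReal_univ_mul_integral_sq_norm hν hintB hintB2
  have henergy : (1 / (8 * π)) * ((∫ y, ‖E y‖ ^ 2) + ∫ y, ‖B y‖ ^ 2) ≤ ∫ y, (μ y - |JEM y|) := by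
    rw [← integral_add hintE2 hintB2, ← integral_const_mul]
    exact integral_mono ((hintE2.add hintB2).const_mul _) hintμ fun y => by linarith [hCDE y]
  set M := (volume (Set.univ : Set Y)).toReal
  calc _ = ((∫ y, ⟪E y, ν y⟫) ^ 2 + (∫ y, ⟪B y, ν y⟫) ^ 2) / (16 * π ^ 2) := by ring
    _ ≤ (M * (∫ y, ‖E y‖ ^ 2) + M * ∫ y, ‖B y‖ ^ 2) / (16 * π ^ 2) := by gcongr <;> assumption
    _ = M / (2 * π) * ((1 / (8 * π)) * ((∫ y, ‖E y‖ ^ 2) + ∫ y, ‖B y‖ ^ 2)) := by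
        field_simp
        ring
    _ ≤ M / (2 * π) * ∫ y, (μ y - |JEM y|) := by gcongr

theorem charge_bound
    {Y : Type*} [MeasureSpace Y] [IsFiniteMeasure (volume : Measure Y)]
    (E B : Y → E3) (ν : Y → E3) (μ JEM : Y → ℝ)
    (hν : ∀ y, ‖ν y‖ = 1)
    -- μ − |J_EM| ≥ 0 on ∂Ω
    (hμ : ∀ y, 0 ≤ μ y - |JEM y|)
    -- charged dominant energy condition μ_EM = μ − (1/8π)(|E|²+|B|²) ≥ |J_EM| on ∂Ω
    (hCDE : ∀ y, |JEM y| ≤ μ y - (1 / (8 * π)) * (‖E y‖ ^ 2 + ‖B y‖ ^ 2))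
    (hintE : Integrable fun y => ⟪E y, ν y⟫)
    (hintB : Integrable fun y => ⟪B y, ν y⟫)
    (hintE2 : Integrable fun y => ‖E y‖ ^ 2)
    (hintB2 : Integrable fun y => ‖B y‖ ^ 2)
    (hintμ : Integrable fun y => μ y - |JEM y|) :
    ((1 / (4 * π)) * ∫ y, ⟪E y, ν y⟫) ^ 2 + ((1 / (4 * π)) * ∫ y, ⟪B y, ν y⟫) ^ 2 ≤
      ((volume (Set.univ : Set Y)).toReal / (2 * π)) * ∫ y, (μ y - |JEM y|) :=
  charge_bound_general E B ν μ JEM hν hCDE hintE hintB hintE2 hintB2 hintμ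

end
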